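/- arXiv:2107.10102 — 4 statements merged into one kernel-verified Lean document; each statement's English description precedes it below -/
import Mathlib

section
/- The 3DSMI instance of size 3 given by the graph H on vertices 0,...,8 (vertex v has gender v mod 3) with rank-1 edges (0,1),(1,2),(2,3),(3,4),(4,5),(5,0),(6,4),(7,8),(8,0), rank-2 edges (4,8),(8,6),(0,7),(1,5),(5,3),(3,1), and rank-3 edge (4,2), has no stable matching. -/
/-- Rank function of the size-3 3DSMI counterexample graph `H` on vertices
`0,…,8` (gender of `v` is `v mod 3`); `rk a b = 0` means there is no edge
from `a` to `b`. -/
def rk : Fin 9 → Fin 9 → ℕ := fun a b =>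
  if (a.val, b.val) ∈ [(0,1),(1,2),(2,3),(3,4),(4,5),(5,0),(6,4),(7,8),(8,0)] then 1
  else if (a.val, b.val) ∈ [(4,8),(8,6),(0,7),(1,5),(5,3),(3,1)] then 2
  else if (a.val, b.val) = (4,2) then 3
  else 0

/-- The edge relation of the graph `H`. -/
def Edg (a b : Fin 9) : Prop := rk a b ≠ 0

/-- `m` encodes a matching of `H`: each vertex has at most one outgoing
matching edge (`none` = single), matching edges are edges of `H`, and every
matched vertex lies on a directed 3-cycle (family) of the matching. -/
def IsMatching (m : Fin 9 → Option (Fin 9)) : Prop :=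
  (∀ v w, m v = some w → Edg v w) ∧
  (∀ v w, m v = some w → ∃ u, m w = some u ∧ m u = some v)

/-- The rank `R_μ(v)`: rank of the outgoing matching edge, `+∞` for singles. -/
def Rm (m : Fin 9 → Option (Fin 9)) (v : Fin 9) : ℕ∞ :=
  (m v).elim ⊤ (fun w => (rk v w : ℕ∞))

/-- `(a,b,c)` is a blocking triple for the matching `m`. -/
def Blocking (m : Fin 9 → Option (Fin 9)) (a b c : Fin 9) : Prop :=
  Edg a b ∧ Edg b c ∧ Edg c a ∧
  (rk a b : ℕ∞) < Rm m a ∧ (rk b c : ℕ∞) < Rm m b ∧ (rk c a : ℕ∞) < Rm m c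

-- auxiliary fast rank
def rkn : Nat → Nat → Nat := fun a b =>
  match a, b with
  | 0,1 => 1 | 1,2 => 1 | 2,3 => 1 | 3,4 => 1 | 4,5 => 1 | 5,0 => 1 | 6,4 => 1 | 7,8 => 1 | 8,0 => 1
  | 4,8 => 2 | 8,6 => 2 | 0,7 => 2 | 1,5 => 2 | 5,3 => 2 | 3,1 => 2
  | 4,2 => 3
  | _,_ => 0

instance (a b : Fin 9) : Decidable (Edg a b) := by unfold Edg; infer_instance

theorem rk_eq_rkn : ∀ a b : Fin 9, rk a b = rkn a.val b.val := by decide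

def RmLtB (x : Option (Fin 9)) (a : Fin 9) (r : ℕ) : Bool :=
  match x with
  | none => true
  | some w => r < rkn a.val w.val

def blockb (m : Fin 9 → Option (Fin 9)) (a b c : Fin 9) : Bool :=
  (rkn a.val b.val != 0) && (rkn b.val c.val != 0) && (rkn c.val a.val != 0) &&
  RmLtB (m a) a (rkn a.val b.val) && RmLtB (m b) b (rkn b.val c.val) &&
  RmLtB (m c) c (rkn c.val a.val)

theorem rmltb (m : Fin 9 → Option (Fin 9)) (a : Fin 9) (r : ℕ) (h : RmLtB (m a) a r = true) :
    (r : ℕ∞) < Rm m a := by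
  unfold Rm
  cases hx : m a with
  | none => exact WithTop.coe_lt_top r
  | some w =>
    rw [hx] at h
    simp only [RmLtB, decide_eq_true_eq] at h
    simpa [Option.elim, Nat.cast_lt, rk_eq_rkn] using h

theorem blockb_blocking (m : Fin 9 → Option (Fin 9)) (a b c : Fin 9)
    (h : blockb m a b c = true) : Blocking m a b c := by
  simp only [blockb, Bool.and_eq_true, bne_iff_ne, ne_eq] at h
  obtain ⟨⟨⟨⟨⟨h1, h2⟩, h3⟩, h4⟩, h5⟩, h6⟩ := h
  refine ⟨?_, ?_, ?_, ?_, ?_, ?_⟩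
  · unfold Edg; rw [rk_eq_rkn]; exact h1
  · unfold Edg; rw [rk_eq_rkn]; exact h2
  · unfold Edg; rw [rk_eq_rkn]; exact h3
  · rw [rk_eq_rkn]; exact rmltb m a _ h4
  · rw [rk_eq_rkn]; exact rmltb m b _ h5
  · rw [rk_eq_rkn]; exact rmltb m c _ h6

def cycb (m : Fin 9 → Option (Fin 9)) : Bool :=
  (List.finRange 9).all fun v =>
    match m v with
    | none => true
    | some w =>
      match m w with
      | none => false
      | some u => m u == some v

theorem cycb_of (m : Fin 9 → Option (Fin 9))
    (H : ∀ v w, m v = some w → ∃ u, m w = some u ∧ m u = some v) : cycb m = true := by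
  simp only [cycb, List.all_eq_true]
  intro v _
  cases hv : m v with
  | none => rfl
  | some w =>
    obtain ⟨u, h1, h2⟩ := H v w hv
    simp [h1, h2]

def exb (m : Fin 9 → Option (Fin 9)) : Bool :=
  (List.finRange 9).any fun a => (List.finRange 9).any fun b =>
    (List.finRange 9).any fun c => blockb m a b c

theorem exb_exists (m : Fin 9 → Option (Fin 9)) (h : exb m = true) :
    ∃ a b c, Blocking m a b c := by
  simp only [exb, List.any_eq_true] at h
  obtain ⟨a, -, b, -, c, -, h⟩ := h
  exact ⟨a, b, c, blockb_blocking m a b c h⟩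

def mk9 (x0 x1 x2 x3 x4 x5 x6 x7 x8 : Option (Fin 9)) : Fin 9 → Option (Fin 9) := fun v =>
  match v with
  | ⟨0,_⟩ => x0 | ⟨1,_⟩ => x1 | ⟨2,_⟩ => x2 | ⟨3,_⟩ => x3 | ⟨4,_⟩ => x4
  | ⟨5,_⟩ => x5 | ⟨6,_⟩ => x6 | ⟨7,_⟩ => x7 | ⟨8,_⟩ => x8

def opts : Fin 9 → List (Option (Fin 9)) := fun v =>
  match v with
  | ⟨0,_⟩ => [none, some 1, some 7]
  | ⟨1,_⟩ => [none, some 2, some 5]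
  | ⟨2,_⟩ => [none, some 3]
  | ⟨3,_⟩ => [none, some 4, some 1]
  | ⟨4,_⟩ => [none, some 5, some 8, some 2]
  | ⟨5,_⟩ => [none, some 0, some 3]
  | ⟨6,_⟩ => [none, some 4]
  | ⟨7,_⟩ => [none, some 8]
  | ⟨8,_⟩ => [none, some 0, some 6]

theorem memOpts : ∀ v w : Fin 9, Edg v w → some w ∈ opts v := by decide

theorem noneOpts : ∀ v : Fin 9, none ∈ opts v := by decide

def good (x0 x1 x2 x3 x4 x5 x6 x7 x8 : Option (Fin 9)) : Bool :=
  !cycb (mk9 x0 x1 x2 x3 x4 x5 x6 x7 x8) || exb (mk9 x0 x1 x2 x3 x4 x5 x6 x7 x8)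

set_option maxHeartbeats 4000000 in
theorem keyAll : ((opts 0).all fun x0 => (opts 1).all fun x1 => (opts 2).all fun x2 =>
    (opts 3).all fun x3 => (opts 4).all fun x4 => (opts 5).all fun x5 =>
    (opts 6).all fun x6 => (opts 7).all fun x7 => (opts 8).all fun x8 =>
    good x0 x1 x2 x3 x4 x5 x6 x7 x8) = true := by decide

theorem key : ∀ x0 ∈ opts 0, ∀ x1 ∈ opts 1, ∀ x2 ∈ opts 2, ∀ x3 ∈ opts 3,
    ∀ x4 ∈ opts 4, ∀ x5 ∈ opts 5, ∀ x6 ∈ opts 6, ∀ x7 ∈ opts 7, ∀ x8 ∈ opts 8,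
    good x0 x1 x2 x3 x4 x5 x6 x7 x8 = true := by
  have h := keyAll
  simp only [List.all_eq_true] at h
  exact h

/-- The 3DSMI instance of size 3 given by the graph `H` has no stable
matching: every matching admits a blocking triple. -/
theorem size_three_counterexample_has_no_stable_matching :
    ¬ ∃ m : Fin 9 → Option (Fin 9), IsMatching m ∧ ∀ a b c, ¬ Blocking m a b c := by
  rintro ⟨m, ⟨hE, hC⟩, hS⟩
  have hmem : ∀ v : Fin 9, m v ∈ opts v := by
    intro v
    cases hv : m v with
    | none => exact noneOpts v
    | some w => exact memOpts v w (hE v w hv)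
  have hg := key (m 0) (hmem 0) (m 1) (hmem 1) (m 2) (hmem 2) (m 3) (hmem 3)
    (m 4) (hmem 4) (m 5) (hmem 5) (m 6) (hmem 6) (m 7) (hmem 7) (m 8) (hmem 8)
  have hm : mk9 (m 0) (m 1) (m 2) (m 3) (m 4) (m 5) (m 6) (m 7) (m 8) = m := by
    funext v; fin_cases v <;> rfl
  rw [good, hm, cycb_of m hC] at hg
  simp only [Bool.not_true, Bool.false_or] at hg
  obtain ⟨a, b, c, hb⟩ := exb_exists m hg
  exact hS a b c hb
end

section
/- Key Lemma: Suppose the graph of a 3DSM problem contains a subgraph on vertices a,b,c,d,e,s,t,x with edges and ranks: r(e,c)=1, r(c,a)=1, r(d,a)=1, r(a,x)=1, r(b,x)=1, r(t,e)=1, r(s,d)=1, r(t,s)=2, r(e,d)=2, r(c,b)=2, r(d,b)=2, r(a,e)=2, r(b,e)=2, r(b,s)=3, r(d,t)=3, r(x,c)=r'_x, r(x,d)=r'_x+1 for some r'_x ≥ 1. If μ is a stable matching and y=μ(x), then either (A) y∈{c,d} and μ(y)∈{a,b,t}, or (B) r(x,y)<r'_x. -/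
/-- **Key Lemma.** Suppose the graph of a 3DSM problem (complete cyclic
preference lists, encoded by an edge relation `E` and a rank function `r`
that is positive and injective on the out-edges of each vertex) contains the
gadget on the eight distinct vertices `a,b,c,d,e,s,t,x` with the listed
ranked edges, where `r(x,c) = r'` and `r(x,d) = r' + 1`.  If `m` is a stable
matching (a partition into families, i.e. `m` is edge-respecting with
`m ∘ m ∘ m = id`, admitting no blocking triple) and `y = m x`, then either
(A) `y ∈ {c,d}` and `m y ∈ {a,b,t}`, or (B) `r(x,y) < r'`. -/
theorem key_lemma
    {V : Type*} (E : V → V → Prop) (r : V → V → ℕ)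
    (hpos : ∀ v w, E v w → 1 ≤ r v w)
    (hinj : ∀ v, Set.InjOn (r v) {w | E v w})
    (a b c d e s t x : V)
    (hdist : ([a, b, c, d, e, s, t, x] : List V).Pairwise (· ≠ ·))
    (r' : ℕ) (hr' : 1 ≤ r')
    (hec : E e c ∧ r e c = 1)
    (hca : E c a ∧ r c a = 1)
    (hda : E d a ∧ r d a = 1)
    (hax : E a x ∧ r a x = 1)
    (hbx : E b x ∧ r b x = 1)
    (hte : E t e ∧ r t e = 1)
    (hsd : E s d ∧ r s d = 1)
    (hts : E t s ∧ r t s = 2)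
    (hed : E e d ∧ r e d = 2)
    (hcb : E c b ∧ r c b = 2)
    (hdb : E d b ∧ r d b = 2)
    (hae : E a e ∧ r a e = 2)
    (hbe : E b e ∧ r b e = 2)
    (hbs : E b s ∧ r b s = 3)
    (hdt : E d t ∧ r d t = 3)
    (hxc : E x c ∧ r x c = r')
    (hxd : E x d ∧ r x d = r' + 1)
    (m : V → V)
    (hmE : ∀ v, E v (m v))
    (hm3 : ∀ v, m (m (m v)) = v)
    (hstable : ∀ u v w, E u v → E v w → E w u →
      r u v < r u (m u) → r v w < r v (m v) → r w u < r w (m w) → False) :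
    ((m x = c ∨ m x = d) ∧ (m (m x) = a ∨ m (m x) = b ∨ m (m x) = t)) ∨
      r x (m x) < r' := by
  -- distinctness facts
  obtain ⟨ha', hdist⟩ := List.pairwise_cons.mp hdist
  obtain ⟨hb', hdist⟩ := List.pairwise_cons.mp hdist
  obtain ⟨hc', hdist⟩ := List.pairwise_cons.mp hdist
  obtain ⟨hd', hdist⟩ := List.pairwise_cons.mp hdist
  obtain ⟨he', hdist⟩ := List.pairwise_cons.mp hdist
  obtain ⟨hs', hdist⟩ := List.pairwise_cons.mp hdist
  have hab : a ≠ b := ha' b (by simp)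
  have hat : a ≠ t := ha' t (by simp)
  have hbt : b ≠ t := hb' t (by simp)
  have hcd : c ≠ d := hc' d (by simp)
  have hex : e ≠ x := he' x (by simp)
  have hsx : s ≠ x := hs' x (by simp)
  -- injectivity of m
  have minj : ∀ u v, m u = m v → u = v := by
    intro u v h
    have := hm3 u
    rw [h, hm3 v] at this
    exact this.symm
  -- partner rank is distinct from rank of any other out-neighbor
  have bound : ∀ v w, E v w → m v ≠ w → r v (m v) ≠ r v w := by
    intro v w hE hne h
    exact hne (hinj v (hmE v) hE h)
  by_cases hmx : m x = c
  · left
    refine ⟨Or.inl hmx, ?_⟩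
    rw [hmx]
    by_contra hcon
    push_neg at hcon
    obtain ⟨h1, h2, _⟩ := hcon
    have hmcx : m (m c) = x := by have := hm3 x; rw [hmx] at this; exact this
    have hmec : m e ≠ c := by
      intro h
      have := hm3 e
      rw [h, hmcx] at this
      exact hex this.symm
    have hmax : m a ≠ x := by
      intro h
      have := hm3 a
      rw [h, hmx] at this
      exact h1 this
    have Rc : 3 ≤ r c (m c) := by
      have p := hpos c (m c) (hmE c)
      have q1 := bound c a hca.1 h1; rw [hca.2] at q1
      have q2 := bound c b hcb.1 h2; rw [hcb.2] at q2
      omega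
    have Re : 2 ≤ r e (m e) := by
      have p := hpos e (m e) (hmE e)
      have q1 := bound e c hec.1 hmec; rw [hec.2] at q1
      omega
    by_cases hmae : m a = e
    · -- (c,b,e) blocks
      have hmbx : m b ≠ x := by
        intro h
        have := hm3 b
        rw [h, hmx] at this
        exact h2 this
      have hmbe : m b ≠ e := by
        intro h
        exact hab (minj a b (by rw [hmae, h]))
      have Rb : 3 ≤ r b (m b) := by
        have p := hpos b (m b) (hmE b)
        have q1 := bound b x hbx.1 hmbx; rw [hbx.2] at q1
        have q2 := bound b e hbe.1 hmbe; rw [hbe.2] at q2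
        omega
      exact hstable c b e hcb.1 hbe.1 hec.1 (by rw [hcb.2]; omega)
        (by rw [hbe.2]; omega) (by rw [hec.2]; omega)
    · -- (a,e,c) blocks
      have Ra : 3 ≤ r a (m a) := by
        have p := hpos a (m a) (hmE a)
        have q1 := bound a x hax.1 hmax; rw [hax.2] at q1
        have q2 := bound a e hae.1 hmae; rw [hae.2] at q2
        omega
      exact hstable a e c hae.1 hec.1 hca.1 (by rw [hae.2]; omega)
        (by rw [hec.2]; omega) (by rw [hca.2]; omega)
  · by_cases hmx' : m x = d
    · left
      refine ⟨Or.inr hmx', ?_⟩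
      rw [hmx']
      by_contra hcon
      push_neg at hcon
      obtain ⟨h1, h2, h3⟩ := hcon
      have hmdx : m (m d) = x := by have := hm3 x; rw [hmx'] at this; exact this
      have hmax : m a ≠ x := by
        intro h
        have := hm3 a
        rw [h, hmx'] at this
        exact h1 this
      have hmsd : m s ≠ d := by
        intro h
        have := hm3 s
        rw [h, hmdx] at this
        exact hsx this.symm
      have hmed : m e ≠ d := by
        intro h
        have := hm3 e
        rw [h, hmdx] at this
        exact hex this.symm
      have Rd : 4 ≤ r d (m d) := by
        have p := hpos d (m d) (hmE d)
        have q1 := bound d a hda.1 h1; rw [hda.2] at q1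
        have q2 := bound d b hdb.1 h2; rw [hdb.2] at q2
        have q3 := bound d t hdt.1 h3; rw [hdt.2] at q3
        omega
      have Rs : 2 ≤ r s (m s) := by
        have p := hpos s (m s) (hmE s)
        have q1 := bound s d hsd.1 hmsd; rw [hsd.2] at q1
        omega
      have Rx : r x (m x) = r' + 1 := by rw [hmx', hxd.2]
      by_cases hmca : m c = a
      · by_cases hmec : m e = c
        · have hmae : m a = e := by
            have := hm3 e
            rw [hmec, hmca] at this
            exact this
          have hmte : m t ≠ e := by
            intro h
            have := hm3 t
            rw [h, hmec, hmca] at this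
            exact hat this
          by_cases hmts : m t = s
          · -- (b,s,d) blocks
            have hmbx : m b ≠ x := by
              intro h
              have := hm3 b
              rw [h, hmx'] at this
              exact h2 this
            have hmbe : m b ≠ e := by
              intro h
              exact hab (minj a b (by rw [hmae, h]))
            have hmbs : m b ≠ s := by
              intro h
              exact hbt (minj b t (by rw [hmts, h]))
            have Rb : 4 ≤ r b (m b) := by
              have p := hpos b (m b) (hmE b)
              have q1 := bound b x hbx.1 hmbx; rw [hbx.2] at q1
              have q2 := bound b e hbe.1 hmbe; rw [hbe.2] at q2
              have q3 := bound b s hbs.1 hmbs; rw [hbs.2] at q3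
              omega
            exact hstable b s d hbs.1 hsd.1 hdb.1 (by rw [hbs.2]; omega)
              (by rw [hsd.2]; omega) (by rw [hdb.2]; omega)
          · -- (t,s,d) blocks
            have Rt : 3 ≤ r t (m t) := by
              have p := hpos t (m t) (hmE t)
              have q1 := bound t e hte.1 hmte; rw [hte.2] at q1
              have q2 := bound t s hts.1 hmts; rw [hts.2] at q2
              omega
            exact hstable t s d hts.1 hsd.1 hdt.1 (by rw [hts.2]; omega)
              (by rw [hsd.2]; omega) (by rw [hdt.2]; omega)
        · -- m e ∉ {c,d}, so Re ≥ 3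
          have Re : 3 ≤ r e (m e) := by
            have p := hpos e (m e) (hmE e)
            have q1 := bound e c hec.1 hmec; rw [hec.2] at q1
            have q2 := bound e d hed.1 hmed; rw [hed.2] at q2
            omega
          by_cases hmbe : m b = e
          · -- (a,e,d) blocks
            have hmae : m a ≠ e := by
              intro h
              exact hab (minj a b (by rw [hmbe, h]))
            have Ra : 3 ≤ r a (m a) := by
              have p := hpos a (m a) (hmE a)
              have q1 := bound a x hax.1 hmax; rw [hax.2] at q1
              have q2 := bound a e hae.1 hmae; rw [hae.2] at q2
              omega
            exact hstable a e d hae.1 hed.1 hda.1 (by rw [hae.2]; omega)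
              (by rw [hed.2]; omega) (by rw [hda.2]; omega)
          · -- (b,e,d) blocks
            have hmbx : m b ≠ x := by
              intro h
              have := hm3 b
              rw [h, hmx'] at this
              exact h2 this
            have Rb : 3 ≤ r b (m b) := by
              have p := hpos b (m b) (hmE b)
              have q1 := bound b x hbx.1 hmbx; rw [hbx.2] at q1
              have q2 := bound b e hbe.1 hmbe; rw [hbe.2] at q2
              omega
            exact hstable b e d hbe.1 hed.1 hdb.1 (by rw [hbe.2]; omega)
              (by rw [hed.2]; omega) (by rw [hdb.2]; omega)
      · -- (c,a,x) blocks
        have Rc : 2 ≤ r c (m c) := by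
          have p := hpos c (m c) (hmE c)
          have q1 := bound c a hca.1 hmca; rw [hca.2] at q1
          omega
        have Ra : 2 ≤ r a (m a) := by
          have p := hpos a (m a) (hmE a)
          have q1 := bound a x hax.1 hmax; rw [hax.2] at q1
          omega
        exact hstable c a x hca.1 hax.1 hxc.1 (by rw [hca.2]; omega)
          (by rw [hax.2]; omega) (by rw [hxc.2, Rx]; omega)
    · right
      by_contra hge
      push_neg at hge
      have Rx : r' + 2 ≤ r x (m x) := by
        have q1 := bound x c hxc.1 hmx; rw [hxc.2] at q1
        have q2 := bound x d hxd.1 hmx'; rw [hxd.2] at q2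
        omega
      by_cases hmax : m a = x
      · have hmbx : m b ≠ x := by
          intro h
          exact hab (minj a b (by rw [hmax, h]))
        have Rb : 2 ≤ r b (m b) := by
          have p := hpos b (m b) (hmE b)
          have q1 := bound b x hbx.1 hmbx; rw [hbx.2] at q1
          omega
        have hmca : m c ≠ a := by
          intro h
          have := hm3 c
          rw [h, hmax] at this
          exact hmx this
        have hmda : m d ≠ a := by
          intro h
          have := hm3 d
          rw [h, hmax] at this
          exact hmx' this
        by_cases hmcb : m c = b
        · -- (d,b,x) blocks
          have hmdb : m d ≠ b := by
            intro h
            exact hcd (minj c d (by rw [hmcb, h]))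
          have Rd : 3 ≤ r d (m d) := by
            have p := hpos d (m d) (hmE d)
            have q1 := bound d a hda.1 hmda; rw [hda.2] at q1
            have q2 := bound d b hdb.1 hmdb; rw [hdb.2] at q2
            omega
          exact hstable d b x hdb.1 hbx.1 hxd.1 (by rw [hdb.2]; omega)
            (by rw [hbx.2]; omega) (by rw [hxd.2]; omega)
        · -- (c,b,x) blocks
          have Rc : 3 ≤ r c (m c) := by
            have p := hpos c (m c) (hmE c)
            have q1 := bound c a hca.1 hmca; rw [hca.2] at q1
            have q2 := bound c b hcb.1 hmcb; rw [hcb.2] at q2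
            omega
          exact hstable c b x hcb.1 hbx.1 hxc.1 (by rw [hcb.2]; omega)
            (by rw [hbx.2]; omega) (by rw [hxc.2]; omega)
      · have Ra : 2 ≤ r a (m a) := by
          have p := hpos a (m a) (hmE a)
          have q1 := bound a x hax.1 hmax; rw [hax.2] at q1
          omega
        by_cases hmca : m c = a
        · -- (d,a,x) blocks
          have hmda : m d ≠ a := by
            intro h
            exact hcd (minj c d (by rw [hmca, h]))
          have Rd : 2 ≤ r d (m d) := by
            have p := hpos d (m d) (hmE d)
            have q1 := bound d a hda.1 hmda; rw [hda.2] at q1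
            omega
          exact hstable d a x hda.1 hax.1 hxd.1 (by rw [hda.2]; omega)
            (by rw [hax.2]; omega) (by rw [hxd.2]; omega)
        · -- (c,a,x) blocks
          have Rc : 2 ≤ r c (m c) := by
            have p := hpos c (m c) (hmE c)
            have q1 := bound c a hca.1 hmca; rw [hca.2] at q1
            omega
          exact hstable c a x hca.1 hax.1 hxc.1 (by rw [hca.2]; omega)
            (by rw [hax.2]; omega) (by rw [hxc.2]; omega)
end

section
/- Theorem (8n construction): Let H be the graph of a 3DSMI problem of size n with no stable matching. Construct the graph G of a 3DSM problem of size 8n by taking H as a subgraph (same ranks) and attaching to each vertex x of H a disjoint copy H_x of the Key-Lemma gadget (vertices a_x,b_x,c_x,d_x,e_x,s_x,t_x) with r'_x = ρ_H(x)+1, where ρ_H(x) is the maximum rank of an edge of H out of x, completing the remaining ranks arbitrarily to full preference lists. Then G has no stable matching. -/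
/-- **The 8n construction.** Let `H` (edge relation `EH`, ranks `rH`,
`ρ x` = maximal rank of an `H`-edge out of `x`) be the graph of a 3DSMI
problem with no stable matching. Build the graph `G` of a 3DSM problem on
the vertex set `VH ⊕ VH × Fin 7`: `H` is a subgraph (same ranks), and at
each vertex `x` of `H` a disjoint copy of the Key-Lemma gadget is attached,
with gadget vertices `a_x,…,t_x` encoded as `(x,0),…,(x,6)`, and with
`r(x, c_x) = ρ x + 1`, `r(x, d_x) = ρ x + 2` (so `r'_x = ρ_H(x) + 1`); the
edges of rank `≤ ρ x` out of `x` are exactly its `H`-edges, and the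
remaining ranks are arbitrary. Then `G` has no stable matching. -/
theorem eight_n_construction_no_stable_matching
    {VH : Type*} (EH : VH → VH → Prop) (rH : VH → VH → ℕ) (ρ : VH → ℕ)
    (hρ : ∀ x y, EH x y → rH x y ≤ ρ x)
    -- `H` has no stable matching (3DSMI: matchings may leave singles)
    (hH : ∀ mH : VH → Option VH,
      (∀ v w, mH v = some w → EH v w) →
      (∀ v w, mH v = some w → ∃ u, mH w = some u ∧ mH u = some v) →
      ∃ u v w, EH u v ∧ EH v w ∧ EH w u ∧
        (rH u v : ℕ∞) < (mH u).elim ⊤ (fun z => (rH u z : ℕ∞)) ∧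
        (rH v w : ℕ∞) < (mH v).elim ⊤ (fun z => (rH v z : ℕ∞)) ∧
        (rH w u : ℕ∞) < (mH w).elim ⊤ (fun z => (rH w z : ℕ∞)))
    (E : VH ⊕ VH × Fin 7 → VH ⊕ VH × Fin 7 → Prop)
    (r : VH ⊕ VH × Fin 7 → VH ⊕ VH × Fin 7 → ℕ)
    (hpos : ∀ v w, E v w → 1 ≤ r v w)
    (hinj : ∀ v, Set.InjOn (r v) {w | E v w})
    -- `H` is a subgraph of `G`, with the same ranks
    (hEH : ∀ x y, EH x y ↔ E (.inl x) (.inl y))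
    (hrH : ∀ x y, EH x y → r (.inl x) (.inl y) = rH x y)
    -- the `G`-edges out of `x ∈ V(H)` of rank at most `ρ x` are its `H`-edges
    (hsmall : ∀ x w, E (.inl x) w → r (.inl x) w ≤ ρ x →
      ∃ y, w = Sum.inl y ∧ EH x y)
    -- the gadget attached at `x`; coordinates `0,…,6` are `a,b,c,d,e,s,t`
    (hgadget : ∀ x : VH,
      (E (.inr (x,4)) (.inr (x,2)) ∧ r (.inr (x,4)) (.inr (x,2)) = 1) ∧ -- e→c
      (E (.inr (x,2)) (.inr (x,0)) ∧ r (.inr (x,2)) (.inr (x,0)) = 1) ∧ -- c→a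
      (E (.inr (x,3)) (.inr (x,0)) ∧ r (.inr (x,3)) (.inr (x,0)) = 1) ∧ -- d→a
      (E (.inr (x,0)) (.inl x) ∧ r (.inr (x,0)) (.inl x) = 1) ∧        -- a→x
      (E (.inr (x,1)) (.inl x) ∧ r (.inr (x,1)) (.inl x) = 1) ∧        -- b→x
      (E (.inr (x,6)) (.inr (x,4)) ∧ r (.inr (x,6)) (.inr (x,4)) = 1) ∧ -- t→e
      (E (.inr (x,5)) (.inr (x,3)) ∧ r (.inr (x,5)) (.inr (x,3)) = 1) ∧ -- s→d
      (E (.inr (x,6)) (.inr (x,5)) ∧ r (.inr (x,6)) (.inr (x,5)) = 2) ∧ -- t→s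
      (E (.inr (x,4)) (.inr (x,3)) ∧ r (.inr (x,4)) (.inr (x,3)) = 2) ∧ -- e→d
      (E (.inr (x,2)) (.inr (x,1)) ∧ r (.inr (x,2)) (.inr (x,1)) = 2) ∧ -- c→b
      (E (.inr (x,3)) (.inr (x,1)) ∧ r (.inr (x,3)) (.inr (x,1)) = 2) ∧ -- d→b
      (E (.inr (x,0)) (.inr (x,4)) ∧ r (.inr (x,0)) (.inr (x,4)) = 2) ∧ -- a→e
      (E (.inr (x,1)) (.inr (x,4)) ∧ r (.inr (x,1)) (.inr (x,4)) = 2) ∧ -- b→e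
      (E (.inr (x,1)) (.inr (x,5)) ∧ r (.inr (x,1)) (.inr (x,5)) = 3) ∧ -- b→s
      (E (.inr (x,3)) (.inr (x,6)) ∧ r (.inr (x,3)) (.inr (x,6)) = 3) ∧ -- d→t
      (E (.inl x) (.inr (x,2)) ∧ r (.inl x) (.inr (x,2)) = ρ x + 1) ∧   -- x→c
      (E (.inl x) (.inr (x,3)) ∧ r (.inl x) (.inr (x,3)) = ρ x + 2)) :  -- x→d
    -- then `G` has no stable matching
    ¬ ∃ m : VH ⊕ VH × Fin 7 → VH ⊕ VH × Fin 7,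
      (∀ v, E v (m v)) ∧ (∀ v, m (m (m v)) = v) ∧
      (∀ u v w, E u v → E v w → E w u →
        r u v < r u (m u) → r v w < r v (m v) → r w u < r w (m w) → False) := by
  rintro ⟨m, hmE, hm3, hstab⟩
  have minj : Function.Injective m := by
    intro a b h
    have h2 : m (m (m a)) = m (m (m b)) := by rw [h]
    rwa [hm3 a, hm3 b] at h2
  have hforce : ∀ v w, E v w → r v (m v) = r v w → m v = w := by
    intro v w e h
    exact hinj v (hmE v) e h
  have hne1 : ∀ (v w : VH ⊕ VH × Fin 7) (k : ℕ), E v w → r v w = k → m v ≠ w →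
      r v (m v) ≠ k := by
    intro v w k e hr hne hk
    exact hne (hforce v w e (by rw [hr]; exact hk))
  have hlr : ∀ (a : VH) (b : VH × Fin 7), (Sum.inl a : VH ⊕ VH × Fin 7) ≠ Sum.inr b :=
    fun a b h => by cases h
  have hinrne : ∀ (x : VH) (i j : Fin 7), i ≠ j →
      (Sum.inr (x, i) : VH ⊕ VH × Fin 7) ≠ Sum.inr (x, j) := by
    intro x i j hij h
    injection h with h'
    exact hij (congrArg Prod.snd h')
  -- Step 1: no vertex of H has rank worse than ρ x + 2
  have hle2 : ∀ x : VH, r (.inl x) (m (.inl x)) ≤ ρ x + 2 := by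
    intro x
    obtain ⟨⟨eEC, rEC⟩, ⟨eCA, rCA⟩, ⟨eDA, rDA⟩, ⟨eAX, rAX⟩, ⟨eBX, rBX⟩, ⟨eTE, rTE⟩,
      ⟨eSD, rSD⟩, ⟨eTS, rTS⟩, ⟨eED, rED⟩, ⟨eCB, rCB⟩, ⟨eDB, rDB⟩, ⟨eAE, rAE⟩,
      ⟨eBE, rBE⟩, ⟨eBS, rBS⟩, ⟨eDT, rDT⟩, ⟨eXC, rXC⟩, ⟨eXD, rXD⟩⟩ := hgadget x
    by_contra hR
    push_neg at hR
    have sXC : r (.inl x) (.inr (x,2)) < r (.inl x) (m (.inl x)) := by rw [rXC]; omega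
    have sXD : r (.inl x) (.inr (x,3)) < r (.inl x) (m (.inl x)) := by rw [rXD]; omega
    by_cases hA : m (.inr (x,0)) = .inl x
    · have hpre : m (m (.inl x)) = .inr (x,0) :=
        minj (show m (m (m (Sum.inl x))) = m (Sum.inr (x,0)) by rw [hm3, hA])
      have hBne : m (.inr (x,1)) ≠ .inl x := by
        intro h
        exact hinrne x 1 0 (by decide) (minj (h.trans hA.symm))
      have sB : r (.inr (x,1)) (.inl x) < r (.inr (x,1)) (m (.inr (x,1))) := by
        have h1 := hne1 _ _ 1 eBX rBX hBne
        have h2 := hpos _ _ (hmE (.inr (x,1)))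
        rw [rBX]; omega
      have hCB : m (.inr (x,2)) = .inr (x,1) := by
        have hnb : ¬ (r (.inr (x,2)) (.inr (x,1)) < r (.inr (x,2)) (m (.inr (x,2)))) :=
          fun s => hstab _ _ _ eXC eCB eBX sXC s sB
        rw [rCB] at hnb
        have h1 := hpos _ _ (hmE (.inr (x,2)))
        have hCA : m (.inr (x,2)) ≠ .inr (x,0) := by
          intro h
          have hCmX : (Sum.inr (x,2) : VH ⊕ VH × Fin 7) = m (Sum.inl x) :=
            minj (h.trans hpre.symm)
          rw [← hCmX, rXC] at hR
          omega
        have h2 := hne1 _ _ 1 eCA rCA hCA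
        exact hforce _ _ eCB (by rw [rCB]; omega)
      have hnb : ¬ (r (.inr (x,3)) (.inr (x,1)) < r (.inr (x,3)) (m (.inr (x,3)))) :=
        fun s => hstab _ _ _ eXD eDB eBX sXD s sB
      rw [rDB] at hnb
      have h1 := hpos _ _ (hmE (.inr (x,3)))
      have hDA : m (.inr (x,3)) ≠ .inr (x,0) := by
        intro h
        have hDmX : (Sum.inr (x,3) : VH ⊕ VH × Fin 7) = m (Sum.inl x) :=
          minj (h.trans hpre.symm)
        rw [← hDmX, rXD] at hR
        omega
      have h2 := hne1 _ _ 1 eDA rDA hDA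
      have hDB : m (.inr (x,3)) = .inr (x,1) := hforce _ _ eDB (by rw [rDB]; omega)
      exact hinrne x 3 2 (by decide) (minj (hDB.trans hCB.symm))
    · have sA : r (.inr (x,0)) (.inl x) < r (.inr (x,0)) (m (.inr (x,0))) := by
        have h1 := hne1 _ _ 1 eAX rAX hA
        have h2 := hpos _ _ (hmE (.inr (x,0)))
        rw [rAX]; omega
      have hCA : m (.inr (x,2)) = .inr (x,0) := by
        have hnb : ¬ (r (.inr (x,2)) (.inr (x,0)) < r (.inr (x,2)) (m (.inr (x,2)))) :=
          fun s => hstab _ _ _ eXC eCA eAX sXC s sA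
        rw [rCA] at hnb
        have h1 := hpos _ _ (hmE (.inr (x,2)))
        exact hforce _ _ eCA (by rw [rCA]; omega)
      have hDA : m (.inr (x,3)) = .inr (x,0) := by
        have hnb : ¬ (r (.inr (x,3)) (.inr (x,0)) < r (.inr (x,3)) (m (.inr (x,3)))) :=
          fun s => hstab _ _ _ eXD eDA eAX sXD s sA
        rw [rDA] at hnb
        have h1 := hpos _ _ (hmE (.inr (x,3)))
        exact hforce _ _ eDA (by rw [rDA]; omega)
      exact hinrne x 2 3 (by decide) (minj (hCA.trans hDA.symm))
  -- Step 2: classification of the partner of a vertex of H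
  have hclass : ∀ x : VH, (∃ y, m (.inl x) = .inl y ∧ EH x y) ∨
      m (.inl x) = .inr (x,2) ∨ m (.inl x) = .inr (x,3) := by
    intro x
    obtain ⟨-, -, -, -, -, -, -, -, -, -, -, -, -, -, -, ⟨eXC, rXC⟩, ⟨eXD, rXD⟩⟩ := hgadget x
    have h2 := hle2 x
    by_cases hc : r (.inl x) (m (.inl x)) = ρ x + 1
    · exact Or.inr (Or.inl (hforce _ _ eXC (by rw [rXC]; exact hc)))
    by_cases hd : r (.inl x) (m (.inl x)) = ρ x + 2
    · exact Or.inr (Or.inr (hforce _ _ eXD (by rw [rXD]; exact hd)))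
    · left
      obtain ⟨y, hy, hEy⟩ := hsmall x (m (.inl x)) (hmE _) (by omega)
      exact ⟨y, hy, hEy⟩
  -- Step 3: validity of matched H-pairs
  have hvalid : ∀ v y : VH, m (.inl v) = .inl y → EH v y := by
    intro v y h
    obtain ⟨-, -, -, -, -, -, -, -, -, -, -, -, -, -, -, ⟨eXC, rXC⟩, ⟨eXD, rXD⟩⟩ := hgadget v
    have h2 := hle2 v
    rw [h] at h2
    have hE' : E (.inl v) (.inl y) := h ▸ hmE (.inl v)
    have h3 : r (.inl v) (.inl y) ≠ ρ v + 1 := by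
      intro hh
      exact hlr y (v,2) (hinj (.inl v) hE' eXC (by rw [rXC]; exact hh))
    have h4 : r (.inl v) (.inl y) ≠ ρ v + 2 := by
      intro hh
      exact hlr y (v,3) (hinj (.inl v) hE' eXD (by rw [rXD]; exact hh))
    obtain ⟨z, hz, hEz⟩ := hsmall v (.inl y) hE' (by omega)
    exact (Sum.inl.inj hz).symm ▸ hEz
  -- Step 4: a matched H-vertex cannot be matched to c of its own gadget
  have hnotC : ∀ v w : VH, m (.inl v) = .inl w → m (.inl w) ≠ .inr (w,2) := by
    intro v w hvw hc
    obtain ⟨⟨eEC, rEC⟩, ⟨eCA, rCA⟩, ⟨eDA, rDA⟩, ⟨eAX, rAX⟩, ⟨eBX, rBX⟩, ⟨eTE, rTE⟩,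
      ⟨eSD, rSD⟩, ⟨eTS, rTS⟩, ⟨eED, rED⟩, ⟨eCB, rCB⟩, ⟨eDB, rDB⟩, ⟨eAE, rAE⟩,
      ⟨eBE, rBE⟩, ⟨eBS, rBS⟩, ⟨eDT, rDT⟩, ⟨eXC, rXC⟩, ⟨eXD, rXD⟩⟩ := hgadget w
    have hmc : m (.inr (w,2)) = .inl v := by
      have h0 := hm3 (.inl v)
      rw [hvw, hc] at h0
      exact h0
    have h1 := hpos _ _ (hmE (.inr (w,2)))
    have h2 := hne1 _ _ 1 eCA rCA (by rw [hmc]; exact hlr v (w,0))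
    have h3 := hne1 _ _ 2 eCB rCB (by rw [hmc]; exact hlr v (w,1))
    have sCa : r (.inr (w,2)) (.inr (w,0)) < r (.inr (w,2)) (m (.inr (w,2))) := by
      rw [rCA]; omega
    have sCb : r (.inr (w,2)) (.inr (w,1)) < r (.inr (w,2)) (m (.inr (w,2))) := by
      rw [rCB]; omega
    have sE : r (.inr (w,4)) (.inr (w,2)) < r (.inr (w,4)) (m (.inr (w,4))) := by
      have h4 := hne1 _ _ 1 eEC rEC (fun h => hlr w (w,4) (minj (hc.trans h.symm)))
      have h5 := hpos _ _ (hmE (.inr (w,4)))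
      rw [rEC]; omega
    have hAE : m (.inr (w,0)) = .inr (w,4) := by
      have hnb : ¬ (r (.inr (w,0)) (.inr (w,4)) < r (.inr (w,0)) (m (.inr (w,0)))) :=
        fun s => hstab _ _ _ eAE eEC eCA s sE sCa
      rw [rAE] at hnb
      have h5 := hpos _ _ (hmE (.inr (w,0)))
      have h6 := hne1 _ _ 1 eAX rAX (fun h => hlr v (w,0) (minj (hvw.trans h.symm)))
      exact hforce _ _ eAE (by rw [rAE]; omega)
    have hnb : ¬ (r (.inr (w,1)) (.inr (w,4)) < r (.inr (w,1)) (m (.inr (w,1)))) :=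
      fun s => hstab _ _ _ eBE eEC eCB s sE sCb
    rw [rBE] at hnb
    have h5 := hpos _ _ (hmE (.inr (w,1)))
    have h6 := hne1 _ _ 1 eBX rBX (fun h => hlr v (w,1) (minj (hvw.trans h.symm)))
    have h7 := hne1 _ _ 2 eBE rBE (fun h => hinrne w 1 0 (by decide) (minj (h.trans hAE.symm)))
    omega
  -- Step 5: a matched H-vertex cannot be matched to d of its own gadget
  have hnotD : ∀ v w : VH, m (.inl v) = .inl w → m (.inl w) ≠ .inr (w,3) := by
    intro v w hvw hd
    obtain ⟨⟨eEC, rEC⟩, ⟨eCA, rCA⟩, ⟨eDA, rDA⟩, ⟨eAX, rAX⟩, ⟨eBX, rBX⟩, ⟨eTE, rTE⟩,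
      ⟨eSD, rSD⟩, ⟨eTS, rTS⟩, ⟨eED, rED⟩, ⟨eCB, rCB⟩, ⟨eDB, rDB⟩, ⟨eAE, rAE⟩,
      ⟨eBE, rBE⟩, ⟨eBS, rBS⟩, ⟨eDT, rDT⟩, ⟨eXC, rXC⟩, ⟨eXD, rXD⟩⟩ := hgadget w
    have hmd : m (.inr (w,3)) = .inl v := by
      have h0 := hm3 (.inl v)
      rw [hvw, hd] at h0
      exact h0
    have hD0 := hpos _ _ (hmE (.inr (w,3)))
    have hD1 := hne1 _ _ 1 eDA rDA (by rw [hmd]; exact hlr v (w,0))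
    have hD2 := hne1 _ _ 2 eDB rDB (by rw [hmd]; exact hlr v (w,1))
    have hD3 := hne1 _ _ 3 eDT rDT (by rw [hmd]; exact hlr v (w,6))
    have sDt : r (.inr (w,3)) (.inr (w,6)) < r (.inr (w,3)) (m (.inr (w,3))) := by
      rw [rDT]; omega
    have sDb : r (.inr (w,3)) (.inr (w,1)) < r (.inr (w,3)) (m (.inr (w,3))) := by
      rw [rDB]; omega
    have sXc : r (.inl w) (.inr (w,2)) < r (.inl w) (m (.inl w)) := by
      rw [hd, rXD, rXC]; omega
    have sAx : r (.inr (w,0)) (.inl w) < r (.inr (w,0)) (m (.inr (w,0))) := by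
      have h6 := hne1 _ _ 1 eAX rAX (fun h => hlr v (w,0) (minj (hvw.trans h.symm)))
      have h5 := hpos _ _ (hmE (.inr (w,0)))
      rw [rAX]; omega
    have hCA : m (.inr (w,2)) = .inr (w,0) := by
      have hnb : ¬ (r (.inr (w,2)) (.inr (w,0)) < r (.inr (w,2)) (m (.inr (w,2)))) :=
        fun s => hstab _ _ _ eXC eCA eAX sXc s sAx
      rw [rCA] at hnb
      have h5 := hpos _ _ (hmE (.inr (w,2)))
      exact hforce _ _ eCA (by rw [rCA]; omega)
    by_cases hEc : m (.inr (w,4)) = .inr (w,2)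
    · have hAE : m (.inr (w,0)) = .inr (w,4) := by
        apply minj
        rw [hEc]
        have h0 := hm3 (.inr (w,2))
        rw [hCA] at h0
        exact h0
      have sS : r (.inr (w,5)) (.inr (w,3)) < r (.inr (w,5)) (m (.inr (w,5))) := by
        have h6 := hne1 _ _ 1 eSD rSD (fun h => hlr w (w,5) (minj (hd.trans h.symm)))
        have h5 := hpos _ _ (hmE (.inr (w,5)))
        rw [rSD]; omega
      have hTS : m (.inr (w,6)) = .inr (w,5) := by
        have hnb : ¬ (r (.inr (w,6)) (.inr (w,5)) < r (.inr (w,6)) (m (.inr (w,6)))) :=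
          fun s => hstab _ _ _ eTS eSD eDT s sS sDt
        rw [rTS] at hnb
        have h5 := hpos _ _ (hmE (.inr (w,6)))
        have h6 := hne1 _ _ 1 eTE rTE
          (fun h => hinrne w 6 0 (by decide) (minj (h.trans hAE.symm)))
        exact hforce _ _ eTS (by rw [rTS]; omega)
      have hnb : ¬ (r (.inr (w,1)) (.inr (w,5)) < r (.inr (w,1)) (m (.inr (w,1)))) :=
        fun s => hstab _ _ _ eBS eSD eDB s sS sDb
      rw [rBS] at hnb
      have h5 := hpos _ _ (hmE (.inr (w,1)))
      have h6 := hne1 _ _ 1 eBX rBX (fun h => hlr v (w,1) (minj (hvw.trans h.symm)))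
      have h7 := hne1 _ _ 2 eBE rBE
        (fun h => hinrne w 1 0 (by decide) (minj (h.trans hAE.symm)))
      have h8 := hne1 _ _ 3 eBS rBS
        (fun h => hinrne w 1 6 (by decide) (minj (h.trans hTS.symm)))
      omega
    · have sEd : r (.inr (w,4)) (.inr (w,3)) < r (.inr (w,4)) (m (.inr (w,4))) := by
        have h6 := hne1 _ _ 1 eEC rEC hEc
        have h7 := hne1 _ _ 2 eED rED (fun h => hlr w (w,4) (minj (hd.trans h.symm)))
        have h5 := hpos _ _ (hmE (.inr (w,4)))
        rw [rED]; omega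
      have hTE : m (.inr (w,6)) = .inr (w,4) := by
        have hnb : ¬ (r (.inr (w,6)) (.inr (w,4)) < r (.inr (w,6)) (m (.inr (w,6)))) :=
          fun s => hstab _ _ _ eTE eED eDT s sEd sDt
        rw [rTE] at hnb
        have h5 := hpos _ _ (hmE (.inr (w,6)))
        exact hforce _ _ eTE (by rw [rTE]; omega)
      have hnb : ¬ (r (.inr (w,1)) (.inr (w,4)) < r (.inr (w,1)) (m (.inr (w,1)))) :=
        fun s => hstab _ _ _ eBE eED eDB s sEd sDb
      rw [rBE] at hnb
      have h5 := hpos _ _ (hmE (.inr (w,1)))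
      have h6 := hne1 _ _ 1 eBX rBX (fun h => hlr v (w,1) (minj (hvw.trans h.symm)))
      have h7 := hne1 _ _ 2 eBE rBE
        (fun h => hinrne w 1 6 (by decide) (minj (h.trans hTE.symm)))
      omega
  -- Step 6: build the induced matching on H and derive the contradiction
  have transfer : ∀ p q : VH, EH p q →
      (rH p q : ℕ∞) <
        ((fun x => Sum.elim (fun y => some y) (fun _ => none) (m (.inl x)) :
          VH → Option VH) p).elim ⊤ (fun z => (rH p z : ℕ∞)) →
      r (.inl p) (.inl q) < r (.inl p) (m (.inl p)) := by
    intro p q hpq hlt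
    cases hm : m (.inl p) with
    | inl z =>
      have hEz := hvalid p z hm
      simp only [hm, Sum.elim_inl, Option.elim_some, Nat.cast_lt] at hlt
      rw [hrH p q hpq, hrH p z hEz]
      exact hlt
    | inr g =>
      have h1 : ρ p + 1 ≤ r (.inl p) (.inr g) := by
        by_contra hh
        push_neg at hh
        obtain ⟨y, hy, -⟩ := hsmall p (.inr g) (hm ▸ hmE (.inl p)) (by omega)
        exact hlr y g hy.symm
      have h2 := hρ p q hpq
      rw [hrH p q hpq]
      omega
  obtain ⟨u, v, w, euv, evw, ewu, bu, bv, bw⟩ :=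
    hH (fun x => Sum.elim (fun y => some y) (fun _ => none) (m (.inl x)))
      (by
        intro v y h
        cases hm : m (.inl v) with
        | inl z =>
          simp only [hm, Sum.elim_inl, Option.some.injEq] at h
          exact hvalid v y (h ▸ hm)
        | inr z =>
          simp [hm] at h)
      (by
        intro v y h
        cases hm : m (.inl v) with
        | inr z =>
          simp [hm] at h
        | inl z =>
          simp only [hm, Sum.elim_inl, Option.some.injEq] at h
          have hm' : m (.inl v) = .inl y := h ▸ hm
          rcases hclass y with ⟨u, hu, -⟩ | hc | hd
          · refine ⟨u, ?_, ?_⟩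
            · simp only [hu, Sum.elim_inl]
            · have h0 := hm3 (.inl v)
              rw [hm', hu] at h0
              simp only [h0, Sum.elim_inl]
          · exact absurd hc (hnotC v y hm')
          · exact absurd hd (hnotD v y hm'))
  exact hstab (.inl u) (.inl v) (.inl w) ((hEH u v).mp euv) ((hEH v w).mp evw)
    ((hEH w u).mp ewu) (transfer u v euv bu) (transfer v w evw bv) (transfer w u ewu bw)
end

section
/- A finite 3DSM problem has a stable matching if and only if its set of matchings contains one admitting no blocking triple; moreover, for the 3DSMI graph H of the size-3 counterexample, every matching is either complementable (three single vertices form a 3-cycle of H) or is one of 8 explicitly listed noncomplementable matchings, and in both cases a blocking triple exists; hence H has no stable matching. -/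
/-- The matching (as an outgoing-edge function) determined by a list of
families: each family `(a,b,c)` contributes the matching edges
`a ↦ b`, `b ↦ c`, `c ↦ a`. -/
def mOf (l : List (Fin 9 × Fin 9 × Fin 9)) (v : Fin 9) : Option (Fin 9) :=
  l.findSome? fun t =>
    if v = t.1 then some t.2.1
    else if v = t.2.1 then some t.2.2
    else if v = t.2.2 then some t.1
    else none

/-- `m` is a stable matching: it admits no blocking triple. -/
def Stable (m : Fin 9 → Option (Fin 9)) : Prop := ∀ a b c, ¬ Blocking m a b c

/-- `m` is complementable: three vertices left single by `m` form a directed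
3-cycle of `H`. -/
def Complementable (m : Fin 9 → Option (Fin 9)) : Prop :=
  ∃ a b c, m a = none ∧ m b = none ∧ m c = none ∧ Edg a b ∧ Edg b c ∧ Edg c a

/- ## auxiliary machinery -/

instance decEdg (a b : Fin 9) : Decidable (Edg a b) := by unfold Edg; infer_instance

def vlist : List (Fin 9) := [0,1,2,3,4,5,6,7,8]

def matchB (m : Fin 9 → Option (Fin 9)) : Bool :=
  vlist.all fun v =>
    match m v with
    | none => true
    | some w => decide (Edg v w) &&
        (match m w with
         | none => false
         | some u => m u == some v)

theorem matchB_iff (m : Fin 9 → Option (Fin 9)) : IsMatching m ↔ matchB m = true := by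
  constructor
  · rintro ⟨he, hc⟩
    rw [matchB, List.all_eq_true]
    intro v _
    cases hv : m v with
    | none => rfl
    | some w =>
      obtain ⟨u, hw, hu⟩ := hc v w hv
      simp [hw, hu, decide_eq_true (he v w hv)]
  · intro h
    rw [matchB, List.all_eq_true] at h
    have hall : ∀ v : Fin 9, v ∈ vlist := by decide
    constructor
    · intro v w hv
      have := h v (hall v)
      rw [hv] at this
      simp only [Bool.and_eq_true, decide_eq_true_eq] at this
      exact this.1
    · intro v w hv
      have := h v (hall v)
      rw [hv] at this
      simp only [Bool.and_eq_true, decide_eq_true_eq] at this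
      obtain ⟨-, h2⟩ := this
      cases hw : m w with
      | none => rw [hw] at h2; exact absurd h2 (by simp)
      | some u =>
        rw [hw] at h2
        refine ⟨u, rfl, ?_⟩
        simpa using h2

instance decIsMatching (m : Fin 9 → Option (Fin 9)) : Decidable (IsMatching m) :=
  decidable_of_iff _ (matchB_iff m).symm

instance decCompl (m : Fin 9 → Option (Fin 9)) : Decidable (Complementable m) := by
  unfold Complementable; infer_instance

instance decBlocking (m : Fin 9 → Option (Fin 9)) (a b c : Fin 9) :
    Decidable (Blocking m a b c) := by
  unfold Blocking Rm; infer_instance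

def optsL : Fin 9 → List (Option (Fin 9)) := fun v =>
  match v with
  | 0 => [none, some 1, some 7]
  | 1 => [none, some 2, some 5]
  | 2 => [none, some 3]
  | 3 => [none, some 4, some 1]
  | 4 => [none, some 5, some 8, some 2]
  | 5 => [none, some 0, some 3]
  | 6 => [none, some 4]
  | 7 => [none, some 8]
  | 8 => [none, some 0, some 6]

def decN (n : Nat) : Fin 9 → Option (Fin 9) := fun v =>
  match v with
  | 0 => (optsL 0).getD (n % 3) none
  | 1 => (optsL 1).getD (n / 3 % 3) none
  | 2 => (optsL 2).getD (n / 9 % 2) none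
  | 3 => (optsL 3).getD (n / 18 % 3) none
  | 4 => (optsL 4).getD (n / 54 % 4) none
  | 5 => (optsL 5).getD (n / 216 % 3) none
  | 6 => (optsL 6).getD (n / 648 % 2) none
  | 7 => (optsL 7).getD (n / 1296 % 2) none
  | 8 => (optsL 8).getD (n / 2592 % 3) none

def TargetP (m : Fin 9 → Option (Fin 9)) : Prop :=
  Complementable m ∨
      (m = mOf [(0,1,5),(2,3,4)] ∨ m = mOf [(0,1,5),(4,8,6)] ∨
       m = mOf [(0,7,8),(1,2,3)] ∨ m = mOf [(0,7,8),(1,5,3)] ∨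
       m = mOf [(0,7,8),(2,3,4)] ∨ m = mOf [(0,7,8),(3,4,5)] ∨
       m = mOf [(1,2,3),(4,8,6)] ∨ m = mOf [(1,5,3),(4,8,6)])

instance decTargetP (m : Fin 9 → Option (Fin 9)) : Decidable (TargetP m) := by
  unfold TargetP; infer_instance

def checkB (n : Nat) : Bool := decide (IsMatching (decN n) → TargetP (decN n))

def allT : Nat → Nat → Nat → Bool
  | 0, _, len => len == 0
  | fuel+1, lo, len =>
    if len == 0 then true
    else if len == 1 then checkB lo
    else allT fuel lo (len/2) && allT fuel (lo+len/2) (len - len/2)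

theorem allT_sound : ∀ fuel lo len, allT fuel lo len = true →
    ∀ i, i < len → checkB (lo + i) = true := by
  intro fuel
  induction fuel with
  | zero =>
    intro lo len h i hi
    simp [allT] at h; omega
  | succ f ih =>
    intro lo len h i hi
    unfold allT at h
    by_cases h0 : len = 0
    · omega
    · by_cases h1 : len = 1
      · have : i = 0 := by omega
        subst this h1
        simpa using h
      · simp [h0, h1] at h
        obtain ⟨hA, hB⟩ := h
        by_cases hi2 : i < len / 2
        · exact ih lo (len/2) hA i hi2
        · have := ih (lo + len/2) (len - len/2) hB (i - len/2) (by omega)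
          have e : lo + len/2 + (i - len/2) = lo + i := by omega
          rwa [e] at this


set_option maxRecDepth 10000 in
set_option maxHeartbeats 4000000 in
theorem bigcheck : allT 20 0 7776 = true := by decide

theorem fin9cases : ∀ v : Fin 9,
    v = 0 ∨ v = 1 ∨ v = 2 ∨ v = 3 ∨ v = 4 ∨ v = 5 ∨ v = 6 ∨ v = 7 ∨ v = 8 := by decide

set_option maxHeartbeats 1000000 in
theorem bridge (m : Fin 9 → Option (Fin 9)) (he : ∀ v w, m v = some w → Edg v w) :
    ∃ n < 7776, m = decN n := by
  have keyN : ∀ v : Fin 9, (none : Option (Fin 9)) ∈ optsL v := by decide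
  have keyS : ∀ v w : Fin 9, Edg v w → some w ∈ optsL v := by decide
  have hmem : ∀ v, m v ∈ optsL v := by
    intro v
    cases h : m v with
    | none => exact keyN v
    | some w => exact keyS v w (he v w h)
  have h2 : ∀ v, ∃ i : Fin (optsL v).length, (optsL v).get i = m v :=
    fun v => List.mem_iff_get.mp (hmem v)
  choose c hc using h2
  have b0 : (c 0).val < 3 := (c 0).isLt
  have b1 : (c 1).val < 3 := (c 1).isLt
  have b2 : (c 2).val < 2 := (c 2).isLt
  have b3 : (c 3).val < 3 := (c 3).isLt
  have b4 : (c 4).val < 4 := (c 4).isLt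
  have b5 : (c 5).val < 3 := (c 5).isLt
  have b6 : (c 6).val < 2 := (c 6).isLt
  have b7 : (c 7).val < 2 := (c 7).isLt
  have b8 : (c 8).val < 3 := (c 8).isLt
  set N8 : ℕ := (c 8).val with m8
  set N7 : ℕ := (c 7).val + 2 * N8 with m7
  set N6 : ℕ := (c 6).val + 2 * N7 with m6
  set N5 : ℕ := (c 5).val + 3 * N6 with m5
  set N4 : ℕ := (c 4).val + 4 * N5 with m4
  set N3 : ℕ := (c 3).val + 3 * N4 with m3
  set N2 : ℕ := (c 2).val + 2 * N3 with m2
  set N1 : ℕ := (c 1).val + 3 * N2 with m1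
  set n : ℕ := (c 0).val + 3 * N1 with hn
  have q0 : n % 3 = (c 0).val ∧ n / 3 = N1 := by omega
  have q1 : N1 % 3 = (c 1).val ∧ N1 / 3 = N2 := by omega
  have q2 : N2 % 2 = (c 2).val ∧ N2 / 2 = N3 := by omega
  have q3 : N3 % 3 = (c 3).val ∧ N3 / 3 = N4 := by omega
  have q4 : N4 % 4 = (c 4).val ∧ N4 / 4 = N5 := by omega
  have q5 : N5 % 3 = (c 5).val ∧ N5 / 3 = N6 := by omega
  have q6 : N6 % 2 = (c 6).val ∧ N6 / 2 = N7 := by omega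
  have q7 : N7 % 2 = (c 7).val ∧ N7 / 2 = N8 := by omega
  have v1 : n / 3 = N1 := q0.2
  have v2 : n / 9 = N2 := by
    rw [show (9:ℕ) = 3*3 from rfl, ← Nat.div_div_eq_div_mul, v1]; exact q1.2
  have v3 : n / 18 = N3 := by
    rw [show (18:ℕ) = 9*2 from rfl, ← Nat.div_div_eq_div_mul, v2]; exact q2.2
  have v4 : n / 54 = N4 := by
    rw [show (54:ℕ) = 18*3 from rfl, ← Nat.div_div_eq_div_mul, v3]; exact q3.2
  have v5 : n / 216 = N5 := by
    rw [show (216:ℕ) = 54*4 from rfl, ← Nat.div_div_eq_div_mul, v4]; exact q4.2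
  have v6 : n / 648 = N6 := by
    rw [show (648:ℕ) = 216*3 from rfl, ← Nat.div_div_eq_div_mul, v5]; exact q5.2
  have v7 : n / 1296 = N7 := by
    rw [show (1296:ℕ) = 648*2 from rfl, ← Nat.div_div_eq_div_mul, v6]; exact q6.2
  have v8 : n / 2592 = N8 := by
    rw [show (2592:ℕ) = 1296*2 from rfl, ← Nat.div_div_eq_div_mul, v7]; exact q7.2
  have e0 : n % 3 = (c 0).val := q0.1
  have e1 : n / 3 % 3 = (c 1).val := by rw [v1]; exact q1.1
  have e2 : n / 9 % 2 = (c 2).val := by rw [v2]; exact q2.1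
  have e3 : n / 18 % 3 = (c 3).val := by rw [v3]; exact q3.1
  have e4 : n / 54 % 4 = (c 4).val := by rw [v4]; exact q4.1
  have e5 : n / 216 % 3 = (c 5).val := by rw [v5]; exact q5.1
  have e6 : n / 648 % 2 = (c 6).val := by rw [v6]; exact q6.1
  have e7 : n / 1296 % 2 = (c 7).val := by rw [v7]; exact q7.1
  have e8 : n / 2592 % 3 = (c 8).val := by rw [v8]; omega
  refine ⟨n, by omega, ?_⟩
  funext v
  have d0 : decN n 0 = (optsL 0).get (c 0) := by
    show (optsL 0).getD (n % 3) none = _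
    rw [e0]; exact List.getD_eq_get _ _ (c 0)
  have d1 : decN n 1 = (optsL 1).get (c 1) := by
    show (optsL 1).getD (n / 3 % 3) none = _
    rw [e1]; exact List.getD_eq_get _ _ (c 1)
  have d2 : decN n 2 = (optsL 2).get (c 2) := by
    show (optsL 2).getD (n / 9 % 2) none = _
    rw [e2]; exact List.getD_eq_get _ _ (c 2)
  have d3 : decN n 3 = (optsL 3).get (c 3) := by
    show (optsL 3).getD (n / 18 % 3) none = _
    rw [e3]; exact List.getD_eq_get _ _ (c 3)
  have d4 : decN n 4 = (optsL 4).get (c 4) := by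
    show (optsL 4).getD (n / 54 % 4) none = _
    rw [e4]; exact List.getD_eq_get _ _ (c 4)
  have d5 : decN n 5 = (optsL 5).get (c 5) := by
    show (optsL 5).getD (n / 216 % 3) none = _
    rw [e5]; exact List.getD_eq_get _ _ (c 5)
  have d6 : decN n 6 = (optsL 6).get (c 6) := by
    show (optsL 6).getD (n / 648 % 2) none = _
    rw [e6]; exact List.getD_eq_get _ _ (c 6)
  have d7 : decN n 7 = (optsL 7).get (c 7) := by
    show (optsL 7).getD (n / 1296 % 2) none = _
    rw [e7]; exact List.getD_eq_get _ _ (c 7)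
  have d8 : decN n 8 = (optsL 8).get (c 8) := by
    show (optsL 8).getD (n / 2592 % 3) none = _
    rw [e8]; exact List.getD_eq_get _ _ (c 8)
  rcases fin9cases v with rfl|rfl|rfl|rfl|rfl|rfl|rfl|rfl|rfl
  · exact (hc 0).symm.trans d0.symm
  · exact (hc 1).symm.trans d1.symm
  · exact (hc 2).symm.trans d2.symm
  · exact (hc 3).symm.trans d3.symm
  · exact (hc 4).symm.trans d4.symm
  · exact (hc 5).symm.trans d5.symm
  · exact (hc 6).symm.trans d6.symm
  · exact (hc 7).symm.trans d7.symm
  · exact (hc 8).symm.trans d8.symm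

theorem classify (m : Fin 9 → Option (Fin 9)) (hm : IsMatching m) : TargetP m := by
  obtain ⟨n, hlt, rfl⟩ := bridge m hm.1
  have h := allT_sound 20 0 7776 bigcheck n (by omega)
  rw [Nat.zero_add] at h
  exact of_decide_eq_true h hm

set_option maxHeartbeats 1000000 in
theorem blocks (m : Fin 9 → Option (Fin 9)) (hm : IsMatching m) :
    ∃ a b c, Blocking m a b c := by
  rcases classify m hm with hC | h8
  · obtain ⟨a, b, c, ha, hb, hc, e1, e2, e3⟩ := hC
    refine ⟨a, b, c, e1, e2, e3, ?_, ?_, ?_⟩ <;>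
      simp [Rm, ha, hb, hc]
  · rcases h8 with h|h|h|h|h|h|h|h <;> subst h <;> decide

/-- The 3DSMI problem given by the graph `H` of the size-3 counterexample has
a stable matching iff some matching admits no blocking triple; moreover every
matching of `H` is either complementable or one of the 8 explicitly listed
noncomplementable matchings, every matching admits a blocking triple, and
hence `H` has no stable matching. -/
theorem size_three_counterexample_analysis :
    ((∃ m, IsMatching m ∧ Stable m) ↔
      (∃ m, IsMatching m ∧ ¬ ∃ a b c, Blocking m a b c)) ∧
    (∀ m, IsMatching m → Complementable m ∨
      (m = mOf [(0,1,5),(2,3,4)] ∨ m = mOf [(0,1,5),(4,8,6)] ∨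
       m = mOf [(0,7,8),(1,2,3)] ∨ m = mOf [(0,7,8),(1,5,3)] ∨
       m = mOf [(0,7,8),(2,3,4)] ∨ m = mOf [(0,7,8),(3,4,5)] ∨
       m = mOf [(1,2,3),(4,8,6)] ∨ m = mOf [(1,5,3),(4,8,6)])) ∧
    (∀ m, IsMatching m → ∃ a b c, Blocking m a b c) ∧
    ¬ ∃ m, IsMatching m ∧ Stable m := by
  refine ⟨?_, fun m hm => classify m hm, fun m hm => blocks m hm, ?_⟩
  · constructor
    · rintro ⟨m, hm, hs⟩
      exact ⟨m, hm, fun ⟨a, b, c, hb⟩ => hs a b c hb⟩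
    · rintro ⟨m, hm, hns⟩
      exact ⟨m, hm, fun a b c hb => hns ⟨a, b, c, hb⟩⟩
  · rintro ⟨m, hm, hs⟩
    obtain ⟨a, b, c, hb⟩ := blocks m hm
    exact hs a b c hb
end
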